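/- arXiv:math/0310322 — 5 statements merged into one kernel-verified Lean document; each statement's English description precedes it below -/
import Mathlib

section
/- Let Δ be a graph with voltage assignment ℓ : D(Δ) → N and let Γ be the lift. Then for every vertex v of Δ and every n ∈ N, the map u ↦ (u, ℓ(u,v)·n) is a graph isomorphism from the local graph at v in Δ onto the local graph at (v,n) in Γ, if and only if every triangle u, v, w in Δ satisfies ℓ(u,v)·ℓ(v,w)·ℓ(w,u) = 1. -/
/-- The lift of a graph `Δ` with respect to a voltage assignment `ℓ : D(Δ) → N`. -/
def liftGraph {V N : Type*} [Group N] (Δ : SimpleGraph V) (ℓ : V → V → N)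
    (hℓ : ∀ u v, Δ.Adj u v → ℓ u v = (ℓ v u)⁻¹) : SimpleGraph (V × N) where
  Adj p q := Δ.Adj p.1 q.1 ∧ ℓ p.1 q.1 = p.2 * q.2⁻¹
  symm := by
    constructor
    rintro ⟨u, m⟩ ⟨v, n⟩ ⟨h1, h2⟩
    exact ⟨h1.symm, by rw [hℓ v u h1.symm, h2]; group⟩
  loopless := by constructor; rintro ⟨u, m⟩ ⟨h, -⟩; exact Δ.loopless.irrefl u h

/-!
The map `u ↦ (u, ℓ(u,v)·n)` is always a bijection from the neighbours of `v` onto those of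
`(v,n)`, and it always reflects adjacency. The lifts of neighbours `u, w` of `v` are adjacent
exactly when `ℓ(u,w) = ℓ(u,v)·ℓ(w,v)⁻¹`, the factor `n` cancelling, and for an edge `uw` this
is the statement that the triangle `u, v, w` has voltage `1`.
-/

namespace liftGraph

variable {V N : Type*} [Group N] {Δ : SimpleGraph V} {ℓ : V → V → N}

@[simp]
lemma adj_iff {hℓ : ∀ u v, Δ.Adj u v → ℓ u v = (ℓ v u)⁻¹} {p q : V × N} :
    (liftGraph Δ ℓ hℓ).Adj p q ↔ Δ.Adj p.1 q.1 ∧ ℓ p.1 q.1 = p.2 * q.2⁻¹ :=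
  Iff.rfl

lemma bijOn_neighborSet (hℓ : ∀ u v, Δ.Adj u v → ℓ u v = (ℓ v u)⁻¹) (v : V) (n : N) :
    Set.BijOn (fun u => (u, ℓ u v * n)) (Δ.neighborSet v)
      ((liftGraph Δ ℓ hℓ).neighborSet (v, n)) := by
  refine ⟨fun u hu => ⟨hu, by rw [hℓ v u hu]; group⟩, fun _ _ _ _ h => congrArg Prod.fst h, ?_⟩
  rintro ⟨u, m⟩ ⟨hvu, hm⟩
  refine ⟨u, hvu, Prod.ext rfl ?_⟩
  change ℓ u v * n = m
  rw [hℓ u v hvu.symm, show ℓ v u = n * m⁻¹ from hm]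
  group

lemma adj_mk_mul_iff {hℓ : ∀ u v, Δ.Adj u v → ℓ u v = (ℓ v u)⁻¹} {u v w : V} (n : N) :
    (liftGraph Δ ℓ hℓ).Adj (u, ℓ u v * n) (w, ℓ w v * n) ↔
      Δ.Adj u w ∧ ℓ u w = ℓ u v * (ℓ w v)⁻¹ := by
  rw [adj_iff, mul_inv_rev, mul_assoc, mul_inv_cancel_left]

end liftGraph

lemma voltage_triangle_eq_one_iff {V N : Type*} [Group N] {Δ : SimpleGraph V}
    {ℓ : V → V → N} (hℓ : ∀ u v, Δ.Adj u v → ℓ u v = (ℓ v u)⁻¹) {u v w : V}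
    (hvw : Δ.Adj v w) (hwu : Δ.Adj w u) :
    ℓ u v * ℓ v w * ℓ w u = 1 ↔ ℓ u w = ℓ u v * (ℓ w v)⁻¹ := by
  rw [hℓ v w hvw, hℓ w u hwu, mul_inv_eq_one, eq_comm]

/-- for every vertex `v` and every `n ∈ N`, the map `u ↦ (u, ℓ(u,v)·n)` is an
isomorphism from the local graph at `v` in `Δ` onto the local graph at `(v,n)` in the lift,
iff every triangle has voltage `1`. -/
theorem local_graph_iso_iff_triangles_trivial {V N : Type*} [Group N] (Δ : SimpleGraph V)
    (ℓ : V → V → N) (hℓ : ∀ u v, Δ.Adj u v → ℓ u v = (ℓ v u)⁻¹) :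
    (∀ (v : V) (n : N),
        Set.BijOn (fun u => (u, ℓ u v * n)) (Δ.neighborSet v)
          ((liftGraph Δ ℓ hℓ).neighborSet (v, n)) ∧
        ∀ u w, u ∈ Δ.neighborSet v → w ∈ Δ.neighborSet v →
          (Δ.Adj u w ↔ (liftGraph Δ ℓ hℓ).Adj (u, ℓ u v * n) (w, ℓ w v * n)))
    ↔ (∀ u v w, Δ.Adj u v → Δ.Adj v w → Δ.Adj w u → ℓ u v * ℓ v w * ℓ w u = 1) := by
  simp only [liftGraph.adj_mk_mul_iff, iff_self_and]
  constructor
  · intro h u v w huv hvw hwu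
    exact (voltage_triangle_eq_one_iff hℓ hvw hwu).2 <| (h v 1).2 u w huv.symm hvw hwu.symm
  · intro h v n
    refine ⟨liftGraph.bijOn_neighborSet hℓ v n, fun u w hvu hvw huw => ?_⟩
    exact (voltage_triangle_eq_one_iff hℓ hvw huw.symm).1 (h u v w hvu.symm hvw huw.symm)
end

section
/- Let Δ be a graph, G a group of automorphisms of Δ acting also on a group N by automorphisms, and ℓ : D(Δ) → N a G-equivariant voltage assignment (i.e. ℓ(v^g, w^g) = (ℓ(v,w))^g for all g ∈ G and adjacent v, w). Let Γ be the lift of Δ with respect to ℓ. Then the semidirect product G ⋉ N acts on Γ by graph automorphisms via (v, n)^{(g,k)} = (v^g, n^g · k), and this action is faithful. -/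
/-!
The element `(g, k)` of `G ⋉ N` acts on `V × N` as the product of the permutation `v ↦ v^g`
with the permutation `n ↦ n^g k` of `N`. Right multiplication by `k` cancels in the voltage
`m n⁻¹` of a lifted edge, so the action preserves adjacency exactly because `ℓ` is equivariant
and `n ↦ n^g` is an injective homomorphism. For faithfulness, fixing `(v, 1)` forces `k = 1`
and `v^g = v` for every `v`.
-/

namespace liftGraph

variable {V N : Type*} [Group N]

def liftPerm (e : Equiv.Perm V) (φ : N ≃* N) (k : N) : Equiv.Perm (V × N) :=
  e.prodCongr ((φ : N ≃ N).trans (Equiv.mulRight k))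

theorem adj_liftPerm_iff (Δ : SimpleGraph V) (ℓ : V → V → N)
    (hℓ : ∀ u v, Δ.Adj u v → ℓ u v = (ℓ v u)⁻¹) (e : Equiv.Perm V) (φ : N ≃* N) (k : N)
    (he : ∀ u v, Δ.Adj u v ↔ Δ.Adj (e u) (e v))
    (hequiv : ∀ u v, Δ.Adj u v → ℓ (e u) (e v) = φ (ℓ u v)) (p q : V × N) :
    (liftGraph Δ ℓ hℓ).Adj (liftPerm e φ k p) (liftPerm e φ k q) ↔
      (liftGraph Δ ℓ hℓ).Adj p q := by
  change Δ.Adj (e p.1) (e q.1) ∧ ℓ (e p.1) (e q.1) = φ p.2 * k * (φ q.2 * k)⁻¹ ↔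
    Δ.Adj p.1 q.1 ∧ ℓ p.1 q.1 = p.2 * q.2⁻¹
  rw [← he]
  refine and_congr_right fun hadj => ?_
  have hvoltage : φ p.2 * k * (φ q.2 * k)⁻¹ = φ (p.2 * q.2⁻¹) := by
    rw [map_mul, map_inv]; group
  rw [hequiv _ _ hadj, hvoltage, φ.injective.eq_iff]

theorem eq_one_of_forall_liftPerm_eq [Nonempty V] {e : Equiv.Perm V} {φ : N ≃* N} {k : N}
    (hfix : ∀ p, liftPerm e φ k p = p) : e = 1 ∧ k = 1 := by
  refine ⟨Equiv.ext fun v => congrArg Prod.fst (hfix (v, 1)), ?_⟩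
  simpa [liftPerm] using congrArg Prod.snd (hfix (Classical.arbitrary V, 1))

end liftGraph

open liftGraph in
theorem semidirect_product_acts_on_lift_general {V N G : Type*} [Group N] [Group G] [Nonempty V]
    (Δ : SimpleGraph V) (ℓ : V → V → N)
    (hℓ : ∀ u v, Δ.Adj u v → ℓ u v = (ℓ v u)⁻¹)
    -- the right action of G on Δ by graph automorphisms
    (a : G → Equiv.Perm V)
    (ha_mul : ∀ g h v, a (g * h) v = a h (a g v))
    (ha_adj : ∀ g u v, Δ.Adj u v ↔ Δ.Adj (a g u) (a g v))
    (ha_faithful : ∀ g, (∀ v, a g v = v) → g = 1)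
    -- the right action of G on N by group automorphisms
    (ν : G → N ≃* N)
    (hν_mul : ∀ g h n, ν (g * h) n = ν h (ν g n))
    -- G-equivariance of the voltage assignment
    (hequiv : ∀ g u v, Δ.Adj u v → ℓ (a g u) (a g v) = ν g (ℓ u v)) :
    -- the action (v,n)^{(g,k)} = (v^g, n^g k) of G ⋉ N on the lift:
    (∀ g k, Function.Bijective (fun p : V × N => (a g p.1, ν g p.2 * k))) ∧
    -- it is by graph automorphisms:
    (∀ (g : G) (k : N) (p q : V × N),
        (liftGraph Δ ℓ hℓ).Adj p q ↔
        (liftGraph Δ ℓ hℓ).Adj (a g p.1, ν g p.2 * k) (a g q.1, ν g q.2 * k)) ∧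
    -- it is a right action of the semidirect product G ⋉ N (whose multiplication is
    -- (g,k)·(h,l) = (g·h, k^h·l)):
    (∀ (g h : G) (k l : N) (p : V × N),
        (a (g * h) p.1, ν (g * h) p.2 * (ν h k * l)) =
          (a h (a g p.1), ν h (ν g p.2 * k) * l)) ∧
    -- and it is faithful:
    (∀ (g : G) (k : N), (∀ p : V × N, (a g p.1, ν g p.2 * k) = p) → g = 1 ∧ k = 1) := by
  refine ⟨fun g k => (liftPerm (a g) (ν g) k).bijective,
    fun g k p q => (adj_liftPerm_iff Δ ℓ hℓ (a g) (ν g) k (ha_adj g) (hequiv g) p q).symm,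
    fun g h k l p => ?_, fun g k hfix => ?_⟩
  · rw [ha_mul, hν_mul, map_mul, mul_assoc]
  · obtain ⟨hg, hk⟩ := eq_one_of_forall_liftPerm_eq hfix
    exact ⟨ha_faithful g fun v => congrArg (· v) hg, hk⟩

/-- if `ℓ` is `G`-equivariant (for a group `G` acting on the right on `Δ` by
automorphisms and on `N` by group automorphisms), then the semidirect product `G ⋉ N`
acts faithfully on the lift by `(v,n)^{(g,k)} = (v^g, n^g·k)`.  Right actions are encoded
by anti-homomorphism conditions. -/
theorem semidirect_product_acts_on_lift {V N G : Type*} [Group N] [Group G] [Nonempty V]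
    (Δ : SimpleGraph V) (ℓ : V → V → N)
    (hℓ : ∀ u v, Δ.Adj u v → ℓ u v = (ℓ v u)⁻¹)
    -- the right action of G on Δ by graph automorphisms
    (a : G → Equiv.Perm V) (ha_one : ∀ v, a 1 v = v)
    (ha_mul : ∀ g h v, a (g * h) v = a h (a g v))
    (ha_adj : ∀ g u v, Δ.Adj u v ↔ Δ.Adj (a g u) (a g v))
    (ha_faithful : ∀ g, (∀ v, a g v = v) → g = 1)
    -- the right action of G on N by group automorphisms
    (ν : G → N ≃* N) (hν_one : ∀ n, ν 1 n = n)
    (hν_mul : ∀ g h n, ν (g * h) n = ν h (ν g n))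
    -- G-equivariance of the voltage assignment
    (hequiv : ∀ g u v, Δ.Adj u v → ℓ (a g u) (a g v) = ν g (ℓ u v)) :
    -- the action (v,n)^{(g,k)} = (v^g, n^g k) of G ⋉ N on the lift:
    (∀ g k, Function.Bijective (fun p : V × N => (a g p.1, ν g p.2 * k))) ∧
    -- it is by graph automorphisms:
    (∀ (g : G) (k : N) (p q : V × N),
        (liftGraph Δ ℓ hℓ).Adj p q ↔
        (liftGraph Δ ℓ hℓ).Adj (a g p.1, ν g p.2 * k) (a g q.1, ν g q.2 * k)) ∧
    -- it is a right action of the semidirect product G ⋉ N (whose multiplication is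
    -- (g,k)·(h,l) = (g·h, k^h·l)):
    (∀ (g h : G) (k l : N) (p : V × N),
        (a (g * h) p.1, ν (g * h) p.2 * (ν h k * l)) =
          (a h (a g p.1), ν h (ν g p.2 * k) * l)) ∧
    -- and it is faithful:
    (∀ (g : G) (k : N), (∀ p : V × N, (a g p.1, ν g p.2 * k) = p) → g = 1 ∧ k = 1) :=
  semidirect_product_acts_on_lift_general Δ ℓ hℓ a ha_mul ha_adj ha_faithful ν hν_mul hequiv
end

section
/- Let Δ be a connected graph, ℓ : D(Δ) → N a voltage assignment with N Abelian, G ≤ Aut(Δ) with an action on N making ℓ G-equivariant, and Γ the lift of Δ. Suppose every triangle in Δ has voltage 0, and let M ≤ N be the subgroup generated by voltages of all closed walks. Fix a vertex v, and for each g ∈ G choose a path P_g from v^g to v with voltage λ(g). Then the stabilizer in G ⋉ N of the connected component of Γ containing (v, 0) equals H = {(g, λ(g) + m) : g ∈ G, m ∈ M}, and H is a group extension of G by M (i.e. {1} × M is a normal subgroup of H with quotient isomorphic to G). -/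
/-- The lift of a graph `Δ` with respect to a voltage assignment `ℓ : D(Δ) → N`, with `N`
an additive (Abelian) group. -/
def liftGraphA {V N : Type*} [AddCommGroup N] (Δ : SimpleGraph V) (ℓ : V → V → N)
    (hℓ : ∀ u v, Δ.Adj u v → ℓ u v = - ℓ v u) : SimpleGraph (V × N) where
  Adj p q := Δ.Adj p.1 q.1 ∧ ℓ p.1 q.1 = p.2 - q.2
  symm := by
    constructor
    rintro ⟨u, m⟩ ⟨v, n⟩ ⟨h1, h2⟩
    exact ⟨h1.symm, by rw [hℓ v u h1.symm, h2]; abel⟩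
  loopless := by constructor; rintro ⟨u, m⟩ ⟨h, -⟩; exact Δ.irrefl h

/-!
`(v, 0)` reaches `(x, n)` in the lift exactly when some walk from `v` to `x` in `Δ` has
voltage `-n`. Any two walks with the same ends differ in voltage by the voltage of a closed
walk, and by connectivity the voltages of closed walks at `v` already form all of `M`; so
`(v, 0)^(g, n) = (v^g, n)` lies in the component of `(v, 0)` iff `n ∈ λ(g) + M`.
Applying `h ∈ G` to the chosen path from `v^g` to `v` gives a path from `v^(gh)` to `v^h` of
voltage `λ(g)^h`, whence `λ(gh) ≡ λ(g)^h + λ(h) (mod M)`: `λ` is a crossed homomorphism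
`G → N/M`, which is what makes `{(g, λ(g) + m)}` a subgroup with kernel `{1} × M`.
-/

namespace SimpleGraph

variable {V N : Type*} [AddCommGroup N] {Δ : SimpleGraph V}

namespace Walk

def voltage (ℓ : V → V → N) {u w : V} (p : Δ.Walk u w) : N :=
  (p.darts.map fun d => ℓ d.fst d.snd).sum

variable (ℓ : V → V → N)

@[simp] lemma voltage_nil {u : V} : (nil : Δ.Walk u u).voltage ℓ = 0 := rfl

@[simp] lemma voltage_cons {u x w : V} (h : Δ.Adj u x) (p : Δ.Walk x w) :
    (cons h p).voltage ℓ = ℓ u x + p.voltage ℓ := by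
  simp [voltage]

@[simp] lemma voltage_copy {u w u' w' : V} (p : Δ.Walk u w) (hu : u = u') (hw : w = w') :
    (p.copy hu hw).voltage ℓ = p.voltage ℓ := by
  subst hu hw; rfl

@[simp] lemma voltage_append {u x w : V} (p : Δ.Walk u x) (q : Δ.Walk x w) :
    (p.append q).voltage ℓ = p.voltage ℓ + q.voltage ℓ := by
  simp [voltage, darts_append]

lemma voltage_reverse (hℓ : ∀ u v, Δ.Adj u v → ℓ u v = -ℓ v u) {u w : V} (p : Δ.Walk u w) :
    p.reverse.voltage ℓ = -p.voltage ℓ := by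
  induction p with
  | nil => simp
  | cons h p ih => simp [ih, hℓ _ _ h.symm, add_comm]

lemma voltage_map {V' N' : Type*} [AddCommGroup N'] {Δ' : SimpleGraph V'} (ℓ' : V' → V' → N')
    (f : Δ →g Δ') (φ : N →+ N') (hf : ∀ x y, Δ.Adj x y → ℓ' (f x) (f y) = φ (ℓ x y))
    {u w : V} (p : Δ.Walk u w) : (p.map f).voltage ℓ' = φ (p.voltage ℓ) := by
  induction p with
  | nil => simp
  | cons h p ih => simp [ih, hf _ _ h]

end Walk

variable (ℓ : V → V → N)

lemma exists_walk_of_chain {k : ℕ} {c : Fin (k + 1) → V} {x y : V} (h0 : c 0 = x)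
    (hl : c (Fin.last k) = y) (hadj : ∀ j : Fin k, Δ.Adj (c j.castSucc) (c j.succ)) :
    ∃ p : Δ.Walk x y, p.voltage ℓ = ∑ j : Fin k, ℓ (c j.castSucc) (c j.succ) := by
  subst h0 hl
  induction k with
  | zero => exact ⟨.nil, by simp⟩
  | succ k ih =>
    obtain ⟨p, hp⟩ := ih (c := fun j => c j.succ) fun j => by simpa using hadj j.succ
    refine ⟨.cons (by simpa using hadj 0) (p.copy rfl (by simp [Fin.succ_last])), ?_⟩
    rw [Walk.voltage_cons, Walk.voltage_copy, hp, Fin.sum_univ_succ]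
    rfl

lemma exists_chain_of_walk {x y : V} (p : Δ.Walk x y) :
    ∃ (k : ℕ) (c : Fin (k + 1) → V), c 0 = x ∧ c (Fin.last k) = y ∧
      (∀ j : Fin k, Δ.Adj (c j.castSucc) (c j.succ)) ∧
      ∑ j : Fin k, ℓ (c j.castSucc) (c j.succ) = p.voltage ℓ := by
  induction p with
  | nil => exact ⟨0, fun _ => _, rfl, rfl, fun j => j.elim0, by simp⟩
  | cons h p ih =>
    obtain ⟨k, c, rfl, rfl, hadj, hsum⟩ := ih
    refine ⟨k + 1, Fin.cons _ c, rfl, by rw [← Fin.succ_last, Fin.cons_succ], ?_, ?_⟩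
    · refine Fin.cases (by simpa using h) fun i => ?_
      simpa [← Fin.succ_castSucc] using hadj i
    · simp [Fin.sum_univ_succ, ← hsum]

lemma liftGraphA_reachable_iff (hℓ : ∀ u v, Δ.Adj u v → ℓ u v = -ℓ v u) {P Q : V × N} :
    (liftGraphA Δ ℓ hℓ).Reachable P Q ↔ ∃ p : Δ.Walk P.1 Q.1, p.voltage ℓ = P.2 - Q.2 := by
  constructor
  · rintro ⟨w⟩
    induction w with
    | nil => exact ⟨.nil, by simp⟩
    | cons h _ ih =>
      obtain ⟨p, hp⟩ := ih
      exact ⟨.cons h.1 p, by rw [Walk.voltage_cons, hp, h.2]; abel⟩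
  · obtain ⟨x, m⟩ := P
    obtain ⟨y, n⟩ := Q
    dsimp only
    rintro ⟨p, hp⟩
    induction p generalizing m with
    | nil => rw [Walk.voltage_nil, eq_comm, sub_eq_zero] at hp; rw [hp]
    | @cons x x' _ h p ih =>
      have hstep : (liftGraphA Δ ℓ hℓ).Adj (x, m) (x', m - ℓ x x') := ⟨h, by simp⟩
      refine hstep.reachable.trans (ih _ ?_)
      rw [Walk.voltage_cons] at hp
      rw [sub_right_comm, ← hp, add_sub_cancel_left]

variable (Δ) in
def closedWalkVoltages (hℓ : ∀ u v, Δ.Adj u v → ℓ u v = -ℓ v u) (v : V) : AddSubgroup N where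
  carrier := {n | ∃ p : Δ.Walk v v, p.voltage ℓ = n}
  zero_mem' := ⟨.nil, rfl⟩
  add_mem' := by
    rintro _ _ ⟨p, rfl⟩ ⟨q, rfl⟩
    exact ⟨p.append q, Walk.voltage_append ℓ p q⟩
  neg_mem' := by
    rintro _ ⟨p, rfl⟩
    exact ⟨p.reverse, p.voltage_reverse ℓ hℓ⟩

variable {ℓ} {hℓ : ∀ u v, Δ.Adj u v → ℓ u v = -ℓ v u}

lemma voltage_mem_closedWalkVoltages {v : V} (p : Δ.Walk v v) :
    p.voltage ℓ ∈ closedWalkVoltages Δ ℓ hℓ v :=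
  ⟨p, rfl⟩

lemma voltage_sub_voltage_mem_closedWalkVoltages {x y : V} (p q : Δ.Walk x y) :
    p.voltage ℓ - q.voltage ℓ ∈ closedWalkVoltages Δ ℓ hℓ y :=
  ⟨q.reverse.append p, by rw [Walk.voltage_append, q.voltage_reverse ℓ hℓ, neg_add_eq_sub]⟩

lemma closedWalkVoltages_le_of_reachable {x y : V} (h : Δ.Reachable x y) :
    closedWalkVoltages Δ ℓ hℓ y ≤ closedWalkVoltages Δ ℓ hℓ x := by
  obtain ⟨q⟩ := h
  rintro _ ⟨p, rfl⟩
  refine ⟨q.append (p.append q.reverse), ?_⟩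
  simp only [Walk.voltage_append, q.voltage_reverse ℓ hℓ]
  abel

lemma closedWalkVoltages_eq_of_reachable {x y : V} (h : Δ.Reachable x y) :
    closedWalkVoltages Δ ℓ hℓ x = closedWalkVoltages Δ ℓ hℓ y :=
  le_antisymm (closedWalkVoltages_le_of_reachable h.symm) (closedWalkVoltages_le_of_reachable h)

lemma closure_closed_chain_sums_eq (hΔ : Δ.Preconnected) (v : V) :
    AddSubgroup.closure {n | ∃ (k : ℕ) (c : Fin (k + 1) → V),
        c 0 = c (Fin.last k) ∧ (∀ j : Fin k, Δ.Adj (c j.castSucc) (c j.succ)) ∧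
        (∑ j : Fin k, ℓ (c j.castSucc) (c j.succ)) = n} =
      closedWalkVoltages Δ ℓ hℓ v := by
  refine le_antisymm ((AddSubgroup.closure_le _).2 ?_) fun n ⟨p, hp⟩ => ?_
  · rintro _ ⟨k, c, hc, hadj, rfl⟩
    obtain ⟨p, hp⟩ := exists_walk_of_chain ℓ rfl hc.symm hadj
    rw [closedWalkVoltages_eq_of_reachable (hΔ v (c 0)), ← hp]
    exact voltage_mem_closedWalkVoltages p
  · obtain ⟨k, c, h0, hl, hadj, hsum⟩ := exists_chain_of_walk ℓ p
    exact AddSubgroup.subset_closure ⟨k, c, h0.trans hl.symm, hadj, hsum.trans hp⟩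

lemma liftGraphA_reachable_zero_iff {x v : V} (P : Δ.Walk x v) {n : N} :
    (liftGraphA Δ ℓ hℓ).Reachable (v, 0) (x, n) ↔
      n - P.voltage ℓ ∈ closedWalkVoltages Δ ℓ hℓ v := by
  rw [liftGraphA_reachable_iff]
  dsimp only
  rw [← AddSubgroup.neg_mem_iff, neg_sub]
  constructor
  · rintro ⟨p, hp⟩
    refine ⟨p.append P, ?_⟩
    rw [Walk.voltage_append, hp]
    abel
  · rintro ⟨q, hq⟩
    refine ⟨q.append P.reverse, ?_⟩
    rw [Walk.voltage_append, P.voltage_reverse ℓ hℓ, hq]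
    abel

lemma map_mem_closedWalkVoltages (hΔ : Δ.Preconnected) (f : Δ →g Δ) (φ : N →+ N)
    (hf : ∀ x y, Δ.Adj x y → ℓ (f x) (f y) = φ (ℓ x y)) {v : V} {m : N}
    (hm : m ∈ closedWalkVoltages Δ ℓ hℓ v) : φ m ∈ closedWalkVoltages Δ ℓ hℓ v := by
  obtain ⟨p, rfl⟩ := hm
  rw [closedWalkVoltages_eq_of_reachable (hΔ v (f v)), ← p.voltage_map ℓ ℓ f φ hf]
  exact voltage_mem_closedWalkVoltages _

lemma map_voltage_add_voltage_sub_voltage_mem (f : Δ →g Δ) (φ : N →+ N)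
    (hf : ∀ x y, Δ.Adj x y → ℓ (f x) (f y) = φ (ℓ x y)) {x y z : V} (p : Δ.Walk x y)
    (q : Δ.Walk (f y) z) (r : Δ.Walk (f x) z) :
    φ (p.voltage ℓ) + q.voltage ℓ - r.voltage ℓ ∈ closedWalkVoltages Δ ℓ hℓ z := by
  simpa [p.voltage_map ℓ ℓ f φ hf] using
    voltage_sub_voltage_mem_closedWalkVoltages (hℓ := hℓ) ((p.map f).append q) r

end SimpleGraph

section Extension

variable {G N : Type*} [Group G] [AddCommGroup N] {M : AddSubgroup N} {ν : G → N ≃+ N}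
  {lam : G → N}

theorem setOf_sub_mem_extension (hν : ∀ g, ∀ m ∈ M, ν g m ∈ M) (h1 : lam 1 ∈ M)
    (hmul : ∀ g h, ν h (lam g) + lam h - lam (g * h) ∈ M) :
    let H : Set (G × N) := {x | x.2 - lam x.1 ∈ M}
    (H = {x : G × N | ∃ m ∈ M, x.2 = lam x.1 + m}) ∧
    ((1, (0 : N)) ∈ H) ∧
    (∀ x ∈ H, ∀ y ∈ H, (x.1 * y.1, ν y.1 x.2 + y.2) ∈ H) ∧
    (∀ x ∈ H, (x.1⁻¹, - ν x.1⁻¹ x.2) ∈ H) ∧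
    (∀ m ∈ M, ((1 : G), (m : N)) ∈ H) ∧
    ({x ∈ H | x.1 = 1} = {x : G × N | x.1 = 1 ∧ x.2 ∈ M}) ∧
    (∀ x ∈ H, ∀ m ∈ M, ν x.1 m ∈ M) ∧
    (∀ g : G, ∃ n : N, (g, n) ∈ H) := by
  have hsub1 : ∀ n, n - lam 1 ∈ M ↔ n ∈ M := fun n =>
    ⟨fun h => by simpa using M.add_mem h h1, fun h => M.sub_mem h h1⟩
  refine ⟨?_, ?_, ?_, ?_, ?_, ?_, fun x _ => hν x.1, fun g => ⟨lam g, by simp⟩⟩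
  · ext x
    exact ⟨fun hx => ⟨_, hx, (add_sub_cancel _ _).symm⟩, fun ⟨m, hm, hx⟩ => by
      rwa [Set.mem_ofPred_eq, hx, add_sub_cancel_left]⟩
  · simpa using M.neg_mem h1
  · rintro ⟨g, k⟩ hk ⟨h, l⟩ hl
    have e : ν h k + l - lam (g * h) =
        ν h (k - lam g) + (l - lam h) + (ν h (lam g) + lam h - lam (g * h)) := by
      rw [map_sub]; abel
    simpa only [Set.mem_ofPred_eq, e] using M.add_mem (M.add_mem (hν h _ hk) hl) (hmul g h)
  · rintro ⟨g, k⟩ hk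
    have hinv := hmul g g⁻¹
    rw [mul_inv_cancel] at hinv
    have e : -ν g⁻¹ k - lam g⁻¹ =
        -ν g⁻¹ (k - lam g) - (ν g⁻¹ (lam g) + lam g⁻¹ - lam 1) - lam 1 := by
      rw [map_sub]; abel
    simpa only [Set.mem_ofPred_eq, e] using
      M.sub_mem (M.sub_mem (M.neg_mem (hν g⁻¹ _ hk)) hinv) h1
  · intro m hm
    simpa [hsub1] using hm
  · ext ⟨g, n⟩
    simp only [Set.mem_ofPred_eq]
    constructor
    · rintro ⟨hn, rfl⟩
      exact ⟨rfl, (hsub1 n).1 hn⟩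
    · rintro ⟨rfl, hn⟩
      exact ⟨(hsub1 n).2 hn, rfl⟩

end Extension

open SimpleGraph

theorem stabilizer_of_component_is_extension_general {V N G : Type*} [AddCommGroup N] [Group G]
    (Δ : SimpleGraph V) (ℓ : V → V → N)
    (hℓ : ∀ u v, Δ.Adj u v → ℓ u v = - ℓ v u)
    (hconn : Δ.Connected)
    -- the right action of G on Δ by graph automorphisms
    (a : G → Equiv.Perm V) (ha_one : ∀ v, a 1 v = v)
    (ha_mul : ∀ g h v, a (g * h) v = a h (a g v))
    (ha_adj : ∀ g u v, Δ.Adj u v ↔ Δ.Adj (a g u) (a g v))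
    -- the right action of G on N by group automorphisms
    (ν : G → N ≃+ N)
    -- G-equivariance of the voltage assignment
    (hequiv : ∀ g u v, Δ.Adj u v → ℓ (a g u) (a g v) = ν g (ℓ u v))
    -- M, the subgroup of N generated by the voltages of all closed walks
    (M : AddSubgroup N)
    (hM : M = AddSubgroup.closure {n | ∃ (k : ℕ) (c : Fin (k + 1) → V),
        c 0 = c (Fin.last k) ∧ (∀ j : Fin k, Δ.Adj (c j.castSucc) (c j.succ)) ∧
        (∑ j : Fin k, ℓ (c j.castSucc) (c j.succ)) = n})
    -- a base vertex v and, for each g, the voltage lam g of a chosen path from v^g to v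
    (v : V) (lam : G → N)
    (hlam : ∀ g, ∃ (k : ℕ) (c : Fin (k + 1) → V),
        c 0 = a g v ∧ c (Fin.last k) = v ∧
        (∀ j : Fin k, Δ.Adj (c j.castSucc) (c j.succ)) ∧
        (∑ j : Fin k, ℓ (c j.castSucc) (c j.succ)) = lam g)
    -- H, the stabilizer in G ⋉ N of the connected component of (v, 0):
    (H : Set (G × N))
    (hH : H = {x : G × N | (liftGraphA Δ ℓ hℓ).Reachable (v, 0) (a x.1 v, x.2)}) :
    -- H = {(g, λ(g) + m) | g ∈ G, m ∈ M}
    (H = {x : G × N | ∃ m ∈ M, x.2 = lam x.1 + m}) ∧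
    -- H is a subgroup of G ⋉ N (with multiplication (g,k)(h,l) = (gh, k^h + l)):
    ((1, (0 : N)) ∈ H) ∧
    (∀ x ∈ H, ∀ y ∈ H, (x.1 * y.1, ν y.1 x.2 + y.2) ∈ H) ∧
    (∀ x ∈ H, (x.1⁻¹, - ν x.1⁻¹ x.2) ∈ H) ∧
    -- {1} × M is a normal subgroup of H:
    (∀ m ∈ M, ((1 : G), (m : N)) ∈ H) ∧
    ({x ∈ H | x.1 = 1} = {x : G × N | x.1 = 1 ∧ x.2 ∈ M}) ∧
    (∀ x ∈ H, ∀ m ∈ M, ν x.1 m ∈ M) ∧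
    -- and the quotient of H by {1} × M is G (projection on the first coordinate is a
    -- surjective homomorphism with kernel {1} × M):
    (∀ g : G, ∃ n : N, (g, n) ∈ H) := by
  let f : G → Δ →g Δ := fun g => ⟨a g, (ha_adj g _ _).mp⟩
  have hP : ∀ g, ∃ p : Δ.Walk (a g v) v, p.voltage ℓ = lam g := fun g => by
    obtain ⟨k, c, h0, hl, hadj, hsum⟩ := hlam g
    exact hsum ▸ exists_walk_of_chain ℓ h0 hl hadj
  choose P hP using hP
  have hMv : M = closedWalkVoltages Δ ℓ hℓ v :=
    hM.trans (closure_closed_chain_sums_eq hconn.preconnected v)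
  have hH' : H = {x | x.2 - lam x.1 ∈ M} := by
    ext ⟨g, n⟩
    rw [hH, Set.mem_ofPred_eq, Set.mem_ofPred_eq, hMv, ← hP]
    exact liftGraphA_reachable_zero_iff (P g)
  have hν : ∀ g, ∀ m ∈ M, ν g m ∈ M := fun g m hm => by
    rw [hMv] at hm ⊢
    exact map_mem_closedWalkVoltages hconn.preconnected (f g) (ν g) (hequiv g) hm
  have h1 : lam 1 ∈ M := by
    rw [hMv, ← hP, ← Walk.voltage_copy ℓ (P 1) (ha_one v) rfl]
    exact voltage_mem_closedWalkVoltages _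
  have hmul : ∀ g h, ν h (lam g) + lam h - lam (g * h) ∈ M := fun g h => by
    rw [hMv, ← hP, ← hP, ← hP]
    simpa using map_voltage_add_voltage_sub_voltage_mem (hℓ := hℓ) (f h) (ν h) (hequiv h)
      (P g) (P h) ((P (g * h)).copy (ha_mul g h v) rfl)
  rw [hH']
  exact setOf_sub_mem_extension hν h1 hmul

/-- with `N` Abelian, every triangle of voltage `0`, `M` the subgroup generated
by voltages of closed walks, and `λ g` the voltage of a chosen path from `v^g` to `v`, the
stabilizer in `G ⋉ N` of the connected component of `(v,0)` is
`H = {(g, λ(g) + m) : g ∈ G, m ∈ M}`, and `H` is an extension of `G` by `M`. -/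
theorem stabilizer_of_component_is_extension {V N G : Type*} [AddCommGroup N] [Group G]
    (Δ : SimpleGraph V) (ℓ : V → V → N)
    (hℓ : ∀ u v, Δ.Adj u v → ℓ u v = - ℓ v u)
    (hconn : Δ.Connected)
    -- the right action of G on Δ by graph automorphisms
    (a : G → Equiv.Perm V) (ha_one : ∀ v, a 1 v = v)
    (ha_mul : ∀ g h v, a (g * h) v = a h (a g v))
    (ha_adj : ∀ g u v, Δ.Adj u v ↔ Δ.Adj (a g u) (a g v))
    -- the right action of G on N by group automorphisms
    (ν : G → N ≃+ N) (hν_one : ∀ n, ν 1 n = n)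
    (hν_mul : ∀ g h n, ν (g * h) n = ν h (ν g n))
    -- G-equivariance of the voltage assignment
    (hequiv : ∀ g u v, Δ.Adj u v → ℓ (a g u) (a g v) = ν g (ℓ u v))
    -- every triangle has voltage 0
    (htri : ∀ u v w, Δ.Adj u v → Δ.Adj v w → Δ.Adj w u → ℓ u v + ℓ v w + ℓ w u = 0)
    -- M, the subgroup of N generated by the voltages of all closed walks
    (M : AddSubgroup N)
    (hM : M = AddSubgroup.closure {n | ∃ (k : ℕ) (c : Fin (k + 1) → V),
        c 0 = c (Fin.last k) ∧ (∀ j : Fin k, Δ.Adj (c j.castSucc) (c j.succ)) ∧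
        (∑ j : Fin k, ℓ (c j.castSucc) (c j.succ)) = n})
    -- a base vertex v and, for each g, the voltage lam g of a chosen path from v^g to v
    (v : V) (lam : G → N)
    (hlam : ∀ g, ∃ (k : ℕ) (c : Fin (k + 1) → V),
        c 0 = a g v ∧ c (Fin.last k) = v ∧
        (∀ j : Fin k, Δ.Adj (c j.castSucc) (c j.succ)) ∧
        (∑ j : Fin k, ℓ (c j.castSucc) (c j.succ)) = lam g)
    -- H, the stabilizer in G ⋉ N of the connected component of (v, 0):
    (H : Set (G × N))
    (hH : H = {x : G × N | (liftGraphA Δ ℓ hℓ).Reachable (v, 0) (a x.1 v, x.2)}) :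
    -- H = {(g, λ(g) + m) | g ∈ G, m ∈ M}
    (H = {x : G × N | ∃ m ∈ M, x.2 = lam x.1 + m}) ∧
    -- H is a subgroup of G ⋉ N (with multiplication (g,k)(h,l) = (gh, k^h + l)):
    ((1, (0 : N)) ∈ H) ∧
    (∀ x ∈ H, ∀ y ∈ H, (x.1 * y.1, ν y.1 x.2 + y.2) ∈ H) ∧
    (∀ x ∈ H, (x.1⁻¹, - ν x.1⁻¹ x.2) ∈ H) ∧
    -- {1} × M is a normal subgroup of H:
    (∀ m ∈ M, ((1 : G), (m : N)) ∈ H) ∧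
    ({x ∈ H | x.1 = 1} = {x : G × N | x.1 = 1 ∧ x.2 ∈ M}) ∧
    (∀ x ∈ H, ∀ m ∈ M, ν x.1 m ∈ M) ∧
    -- and the quotient of H by {1} × M is G (projection on the first coordinate is a
    -- surjective homomorphism with kernel {1} × M):
    (∀ g : G, ∃ n : N, (g, n) ∈ H) :=
  stabilizer_of_component_is_extension_general Δ ℓ hℓ hconn a ha_one ha_mul ha_adj ν hequiv M hM v
    lam hlam H hH
end

section
/- Let 𝔽 have characteristic 2, V = 𝔽⁴, W = Λ²V with the identification Λ²(V*) ≅ Λ²V via a fixed isomorphism Λ⁴V ≅ 𝔽 (denote this identification by φ). Define the voltage assignment ℓ on the graph H̃₃(𝔽) (vertices v ⊗ h with h(v) ≠ 0, adjacency f(w) = g(v) = 0) assigning to the dart from v₁ ⊗ h₁ to v₂ ⊗ h₂ the value h₁(v₁)⁻¹ h₂(v₂)⁻¹ (v₁ ∧ v₂)(h₁ ∧ h₂)^φ ∈ S₂(W). Then ℓ is reductive: whenever u₁ ∼ u₂ ⊥ u₃ in H̃₃(𝔽), one has ℓ(u₂, u₃) = ℓ(u₁, u₃). -/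
open Module

set_option synthInstance.maxHeartbeats 1000000
set_option maxHeartbeats 1000000

/-- The wedge `v ∧ w` as an element of the second exterior power `⋀[𝔽]^2 V`. -/
noncomputable def wedge2 (𝔽 : Type*) {V : Type*} [Field 𝔽] [AddCommGroup V] [Module 𝔽 V]
    (v w : V) : ⋀[𝔽]^2 V :=
  ⟨ExteriorAlgebra.ιMulti 𝔽 2 ![v, w],
   ExteriorAlgebra.ιMulti_range 𝔽 2 (Set.mem_range_self _)⟩

/-- The wedge `v₁ ∧ v₂ ∧ v₃ ∧ v₄` as an element of the fourth exterior power `⋀[𝔽]^4 V`. -/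
noncomputable def wedge4 (𝔽 : Type*) {V : Type*} [Field 𝔽] [AddCommGroup V] [Module 𝔽 V]
    (v₁ v₂ v₃ v₄ : V) : ⋀[𝔽]^4 V :=
  ⟨ExteriorAlgebra.ιMulti 𝔽 4 ![v₁, v₂, v₃, v₄],
   ExteriorAlgebra.ιMulti_range 𝔽 4 (Set.mem_range_self _)⟩

/-- The wedge product `⋀[𝔽]^2 V × ⋀[𝔽]^2 V → ⋀[𝔽]^4 V`. -/
noncomputable def wmul {𝔽 V : Type*} [Field 𝔽] [AddCommGroup V] [Module 𝔽 V]
    (a b : ⋀[𝔽]^2 V) : ⋀[𝔽]^4 V :=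
  ⟨a.1 * b.1, by
    have h : (⋀[𝔽]^4 V) = ⋀[𝔽]^2 V * ⋀[𝔽]^2 V := by
      rw [show (4 : ℕ) = 2 + 2 by norm_num]
      exact pow_add _ 2 2
    exact h ▸ Submodule.mul_mem_mul a.2 b.2⟩

/-- The relation submodule defining the symmetric square. -/
def symRel (𝔽 W : Type*) [Field 𝔽] [AddCommGroup W] [Module 𝔽 W] :
    Submodule 𝔽 (TensorProduct 𝔽 W W) :=
  Submodule.span 𝔽 {x | ∃ v w : W, x = v ⊗ₜ[𝔽] w - w ⊗ₜ[𝔽] v}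

/-- The symmetric square `S₂(W) = (W ⊗ W)/⟨v⊗w − w⊗v⟩`. -/
abbrev SymSq (𝔽 W : Type*) [Field 𝔽] [AddCommGroup W] [Module 𝔽 W] :=
  TensorProduct 𝔽 W W ⧸ symRel 𝔽 W

/-- The symmetric product `vw ∈ S₂(W)`. -/
noncomputable def symMul (𝔽 : Type*) {W : Type*} [Field 𝔽] [AddCommGroup W] [Module 𝔽 W] (v w : W) :
    SymSq 𝔽 W :=
  Submodule.Quotient.mk (v ⊗ₜ[𝔽] w)

/-- The square `w² ∈ S₂(W)`. -/
noncomputable def sqS (𝔽 : Type*) {W : Type*} [Field 𝔽] [AddCommGroup W] [Module 𝔽 W] (w : W) : SymSq 𝔽 W :=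
  symMul 𝔽 w w

/-- The affine non-incident point-hyperplane graph `H̃₃(𝔽)` (for `V = 𝔽⁴`): vertices are pairs
`(v, h)` with `h v ≠ 0` (representing the simple tensor `v ⊗ h`), adjacency is mutual
annihilation. -/
def affPH (𝔽 V : Type*) [Field 𝔽] [AddCommGroup V] [Module 𝔽 V] :
    SimpleGraph {p : V × Module.Dual 𝔽 V // p.2 p.1 ≠ 0} where
  Adj a b := a.1.2 b.1.1 = 0 ∧ b.1.2 a.1.1 = 0
  symm := ⟨fun _ _ h => ⟨h.2, h.1⟩⟩
  loopless := ⟨fun a h => a.2 h.1⟩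

/-- The voltage assignment `ℓ` on `H̃₃(𝔽)`: the dart from `v₁ ⊗ h₁` to `v₂ ⊗ h₂` gets the
voltage `h₁(v₁)⁻¹ h₂(v₂)⁻¹ (v₁ ∧ v₂)(h₁ ∧ h₂)^φ ∈ S₂(Λ²V)`, where `φ` identifies `Λ²(V*)`
with `Λ²V`. -/
noncomputable def volt {𝔽 V : Type*} [Field 𝔽] [AddCommGroup V] [Module 𝔽 V]
    (φ : (⋀[𝔽]^2 (Module.Dual 𝔽 V)) →ₗ[𝔽] ⋀[𝔽]^2 V)
    (a b : {p : V × Module.Dual 𝔽 V // p.2 p.1 ≠ 0}) : SymSq 𝔽 (⋀[𝔽]^2 V) :=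
  ((a.1.2 a.1.1)⁻¹ * (b.1.2 b.1.1)⁻¹) •
    symMul 𝔽 (wedge2 𝔽 a.1.1 b.1.1) (φ (wedge2 𝔽 a.1.2 b.1.2))

/-! Equal neighbourhoods in `H̃₃(𝔽)` force `v₂ ⊗ h₂` to be a scalar multiple of `v₁ ⊗ h₁`: a
vertex `w ⊗ g` with `h₁ w = 0 = g v₁` can be chosen to detect any `w ∈ ker h₁` outside `ker h₂`,
or any `v₂ ∉ 𝔽 v₁` (take `w` the projection of `v₂` to `ker h₁` along `v₁`). The voltage is
bilinear in the first endpoint and normalised by `h(v)`, so it is invariant under rescaling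
`v` and `h` separately. -/

section

variable {𝔽 V W : Type*} [Field 𝔽] [AddCommGroup V] [Module 𝔽 V] [AddCommGroup W] [Module 𝔽 W]

theorem wedge2_smul_left (c : 𝔽) (v w : V) : wedge2 𝔽 (c • v) w = c • wedge2 𝔽 v w :=
  Subtype.ext <| by simp [wedge2, ExteriorAlgebra.ιMulti_apply]

theorem symMul_smul_left (c : 𝔽) (v w : W) : symMul 𝔽 (c • v) w = c • symMul 𝔽 v w := by
  rw [symMul, ← TensorProduct.smul_tmul', Submodule.Quotient.mk_smul, symMul]

theorem symMul_smul_right (c : 𝔽) (v w : W) : symMul 𝔽 v (c • w) = c • symMul 𝔽 v w := by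
  rw [symMul, TensorProduct.tmul_smul, Submodule.Quotient.mk_smul, symMul]

theorem Module.Dual.mem_span_singleton_of_ker_le {f g : Dual 𝔽 V}
    (h : LinearMap.ker f ≤ LinearMap.ker g) : g ∈ Submodule.span 𝔽 {f} := by
  simpa using mem_span_of_iInf_ker_le_ker (L := fun _ : Unit ↦ f) (by simpa using h)

theorem exists_dual_apply_eq_zero_apply_ne_zero {v w : V} (hw : w ∉ Submodule.span 𝔽 {v}) :
    ∃ g : Dual 𝔽 V, g v = 0 ∧ g w ≠ 0 := by
  obtain ⟨g, hgw, hg⟩ := Submodule.exists_dual_map_eq_bot_of_notMem hw inferInstance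
  exact ⟨g, by simpa [Submodule.map_span] using hg, hgw⟩

section affPH

variable {u₁ u₂ : {p : V × Dual 𝔽 V // p.2 p.1 ≠ 0}}

theorem affPH_ker_le_ker_of_neighborSet_eq
    (h : (affPH 𝔽 V).neighborSet u₁ = (affPH 𝔽 V).neighborSet u₂) :
    LinearMap.ker u₁.1.2 ≤ LinearMap.ker u₂.1.2 := by
  intro w (hw : u₁.1.2 w = 0)
  by_cases hw₀ : w = 0
  · simp [hw₀]
  have hw_notMem : w ∉ Submodule.span 𝔽 {u₁.1.1} := by
    rintro hmem
    obtain ⟨c, rfl⟩ := Submodule.mem_span_singleton.mp hmem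
    rw [map_smul, smul_eq_mul, mul_eq_zero] at hw
    exact hw₀ (by rw [hw.resolve_right u₁.2, zero_smul])
  obtain ⟨g, hgv, hgw⟩ := exists_dual_apply_eq_zero_apply_ne_zero hw_notMem
  have hadj : (affPH 𝔽 V).Adj u₁ ⟨(w, g), hgw⟩ := ⟨hw, hgv⟩
  rw [← SimpleGraph.mem_neighborSet, h] at hadj
  exact hadj.1

theorem affPH_mem_span_of_neighborSet_eq
    (h : (affPH 𝔽 V).neighborSet u₁ = (affPH 𝔽 V).neighborSet u₂) :
    u₂.1.1 ∈ Submodule.span 𝔽 {u₁.1.1} := by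
  obtain ⟨⟨v₁, h₁⟩, hu₁⟩ := u₁
  by_contra hv
  obtain ⟨g, hgv, hgv₂⟩ := exists_dual_apply_eq_zero_apply_ne_zero hv
  set w := u₂.1.1 - (h₁ u₂.1.1 / h₁ v₁) • v₁
  have hw : h₁ w = 0 := by
    simp only [w, map_sub, map_smul, smul_eq_mul]
    field_simp [hu₁]
    ring
  have hgw : g w = g u₂.1.1 := by simp [w, hgv]
  have hadj : (affPH 𝔽 V).Adj ⟨(v₁, h₁), hu₁⟩ ⟨(w, g), hgw ▸ hgv₂⟩ := ⟨hw, hgv⟩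
  rw [← SimpleGraph.mem_neighborSet, h] at hadj
  exact hgv₂ hadj.2

end affPH

theorem volt_eq_of_fst_eq_smul (φ : ⋀[𝔽]^2 (Dual 𝔽 V) →ₗ[𝔽] ⋀[𝔽]^2 V)
    {u u' : {p : V × Dual 𝔽 V // p.2 p.1 ≠ 0}} (w : {p : V × Dual 𝔽 V // p.2 p.1 ≠ 0})
    {α β : 𝔽} (hu : u'.1 = (α • u.1.1, β • u.1.2)) :
    volt φ u' w = volt φ u w := by
  obtain ⟨⟨v', h'⟩, hu'⟩ := u'
  obtain ⟨rfl, rfl⟩ := Prod.mk.inj hu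
  obtain ⟨hα, hβ, -⟩ : α ≠ 0 ∧ β ≠ 0 ∧ _ := by simpa using hu'
  simp only [volt, wedge2_smul_left, map_smul, LinearMap.smul_apply, smul_eq_mul,
    symMul_smul_left, symMul_smul_right, smul_smul]
  congr 1
  field_simp [u.2, w.2]

end

theorem volt_reductive_general {𝔽 : Type*} [Field 𝔽]
    (φ : (⋀[𝔽]^2 (Module.Dual 𝔽 (Fin 4 → 𝔽))) →ₗ[𝔽] ⋀[𝔽]^2 (Fin 4 → 𝔽))
    (u₁ u₂ u₃ : {p : (Fin 4 → 𝔽) × Module.Dual 𝔽 (Fin 4 → 𝔽) // p.2 p.1 ≠ 0})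
    (hsim : (affPH 𝔽 (Fin 4 → 𝔽)).neighborSet u₁ = (affPH 𝔽 (Fin 4 → 𝔽)).neighborSet u₂) :
    volt φ u₂ u₃ = volt φ u₁ u₃ := by
  obtain ⟨α, hα⟩ := Submodule.mem_span_singleton.mp (affPH_mem_span_of_neighborSet_eq hsim)
  obtain ⟨β, hβ⟩ := Submodule.mem_span_singleton.mp
    (Module.Dual.mem_span_singleton_of_ker_le (affPH_ker_le_ker_of_neighborSet_eq hsim))
  exact volt_eq_of_fst_eq_smul φ u₃ (Prod.ext hα.symm hβ.symm)

/-- the voltage assignment `ℓ` on `H̃₃(𝔽)` (char 𝔽 = 2, `V = 𝔽⁴`) is reductive: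
whenever `u₁ ∼ u₂ ⊥ u₃` (where `∼` means equal neighbourhoods), `ℓ(u₂,u₃) = ℓ(u₁,u₃)`. -/
theorem volt_reductive {𝔽 : Type*} [Field 𝔽] [CharP 𝔽 2]
    (φ : (⋀[𝔽]^2 (Module.Dual 𝔽 (Fin 4 → 𝔽))) →ₗ[𝔽] ⋀[𝔽]^2 (Fin 4 → 𝔽))
    (u₁ u₂ u₃ : {p : (Fin 4 → 𝔽) × Module.Dual 𝔽 (Fin 4 → 𝔽) // p.2 p.1 ≠ 0})
    (hsim : (affPH 𝔽 (Fin 4 → 𝔽)).neighborSet u₁ = (affPH 𝔽 (Fin 4 → 𝔽)).neighborSet u₂)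
    (hadj : (affPH 𝔽 (Fin 4 → 𝔽)).Adj u₂ u₃) :
    volt φ u₂ u₃ = volt φ u₁ u₃ :=
  volt_reductive_general φ u₁ u₂ u₃ hsim
end

section
/- In the setting of the voltage assignment ℓ on H̃₃(𝔽) (char 𝔽 = 2): if v₀⊗h₀, …, v₄⊗h₄ is a cycle of length 5 in H̃₃(𝔽) with h_i(v_i) = 1 for all i and such that for every i the common null space of h_{i−2}, h_i, h_{i+2} (indices mod 5) is contained in span(v_{i−2}, v_i, v_{i+2}), then for each i one has h_{i−2}(v_i)·h_i(v_{i−2}) + h_{i+2}(v_i)·h_i(v_{i+2}) = 1; summing over all i yields 0 = 1, a contradiction. Hence no such pentagon exists. -/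
open Module

private lemma key_pentagon {𝔽 : Type*} [Field 𝔽] (a b c : Fin 4 → 𝔽)
    (f g k : Module.Dual 𝔽 (Fin 4 → 𝔽))
    (hfa : f a = 1) (hgb : g b = 1) (hkc : k c = 1) (hfc : f c = 0) (hka : k a = 0)
    (hspan : ∀ x : Fin 4 → 𝔽, f x = 0 → g x = 0 → k x = 0 →
      x ∈ Submodule.span 𝔽 ({a, b, c} : Set (Fin 4 → 𝔽))) :
    f b * g a + k b * g c = 1 := by
  set L : (Fin 4 → 𝔽) →ₗ[𝔽] 𝔽 × 𝔽 × 𝔽 := LinearMap.prod f (LinearMap.prod g k) with hL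
  have hker : LinearMap.ker L ≠ ⊥ := by
    intro hbot
    have hinj : Function.Injective L := LinearMap.ker_eq_bot.mp hbot
    have h4 := LinearMap.finrank_le_finrank_of_injective hinj
    simp [Module.finrank_prod, Module.finrank_self, Module.finrank_pi] at h4
  obtain ⟨x, hxker, hx0⟩ := Submodule.exists_mem_ne_zero_of_ne_bot hker
  have hLx : L x = 0 := hxker
  have hfx : f x = 0 := congrArg Prod.fst hLx
  have hgx : g x = 0 := congrArg Prod.fst (congrArg Prod.snd hLx)
  have hkx : k x = 0 := congrArg Prod.snd (congrArg Prod.snd hLx)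
  have hx := hspan x hfx hgx hkx
  rw [Submodule.mem_span_insert] at hx
  obtain ⟨p, y, hy, hxy⟩ := hx
  rw [Submodule.mem_span_insert] at hy
  obtain ⟨q, z, hz, hyz⟩ := hy
  rw [Submodule.mem_span_singleton] at hz
  obtain ⟨r, rfl⟩ := hz
  subst hyz
  subst hxy
  have e1 : p + q * f b = 0 := by
    have := hfx
    simp only [map_add, map_smul, smul_eq_mul, hfa, hfc, mul_one, mul_zero, add_zero] at this
    linear_combination this
  have e2 : p * g a + q + r * g c = 0 := by
    have := hgx
    simp only [map_add, map_smul, smul_eq_mul, hgb, mul_one] at this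
    linear_combination this
  have e3 : q * k b + r = 0 := by
    have := hkx
    simp only [map_add, map_smul, smul_eq_mul, hka, hkc, mul_one, mul_zero, zero_add] at this
    linear_combination this
  have hkey : q * (f b * g a + k b * g c - 1) = 0 := by
    linear_combination g a * e1 + g c * e3 - e2
  rcases mul_eq_zero.mp hkey with hq | h1
  · exfalso
    apply hx0
    have hp : p = 0 := by linear_combination e1 - f b * hq
    have hr : r = 0 := by linear_combination e3 - k b * hq
    rw [hp, hq, hr]
    simp
  · linear_combination h1

/-- there is no pentagon `v₀⊗h₀, …, v₄⊗h₄` in `H̃₃(𝔽)` (char 𝔽 = 2, `V = 𝔽⁴`)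
with `hᵢ(vᵢ) = 1` for all `i` and such that for every `i` the common null space of
`h_{i−2}, h_i, h_{i+2}` is contained in `span(v_{i−2}, v_i, v_{i+2})` (indices mod 5):
each such `i` would give `h_{i−2}(v_i)h_i(v_{i−2}) + h_{i+2}(v_i)h_i(v_{i+2}) = 1`, and
summing over `i` yields `0 = 1`. -/
theorem no_bad_pentagon {𝔽 : Type*} [Field 𝔽] [CharP 𝔽 2]
    (v : ZMod 5 → (Fin 4 → 𝔽)) (h : ZMod 5 → Module.Dual 𝔽 (Fin 4 → 𝔽))
    -- the vertices are in H̃₃(𝔽), normalized so that hᵢ(vᵢ) = 1: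
    (hvert : ∀ i, h i (v i) = 1)
    -- consecutive vertices are adjacent:
    (hadj : ∀ i : ZMod 5, h i (v (i + 1)) = 0 ∧ h (i + 1) (v i) = 0)
    -- common null space condition:
    (hnull : ∀ i : ZMod 5, ∀ x : Fin 4 → 𝔽,
      h (i - 2) x = 0 → h i x = 0 → h (i + 2) x = 0 →
      x ∈ Submodule.span 𝔽 {v (i - 2), v i, v (i + 2)}) :
    False := by
  have key : ∀ i : ZMod 5,
      h (i - 2) (v i) * h i (v (i - 2)) + h (i + 2) (v i) * h i (v (i + 2)) = 1 := by
    intro i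
    have hidx : i + 2 + 1 = i - 2 := by
      have : (-2 : ZMod 5) = 3 := by decide
      rw [sub_eq_add_neg, this]; ring
    have hfc : h (i - 2) (v (i + 2)) = 0 := by
      have := (hadj (i + 2)).2; rwa [hidx] at this
    have hka : h (i + 2) (v (i - 2)) = 0 := by
      have := (hadj (i + 2)).1; rwa [hidx] at this
    exact key_pentagon (v (i - 2)) (v i) (v (i + 2)) (h (i - 2)) (h i) (h (i + 2))
      (hvert _) (hvert _) (hvert _) hfc hka (hnull i)
  have n0m : (0 : ZMod 5) - 2 = 3 := by decide
  have n0p : (0 : ZMod 5) + 2 = 2 := by decide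
  have n1m : (1 : ZMod 5) - 2 = 4 := by decide
  have n1p : (1 : ZMod 5) + 2 = 3 := by decide
  have n2m : (2 : ZMod 5) - 2 = 0 := by decide
  have n2p : (2 : ZMod 5) + 2 = 4 := by decide
  have n3m : (3 : ZMod 5) - 2 = 1 := by decide
  have n3p : (3 : ZMod 5) + 2 = 0 := by decide
  have n4m : (4 : ZMod 5) - 2 = 2 := by decide
  have n4p : (4 : ZMod 5) + 2 = 1 := by decide
  have e0 := key 0; rw [n0m, n0p] at e0
  have e1 := key 1; rw [n1m, n1p] at e1
  have e2 := key 2; rw [n2m, n2p] at e2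
  have e3 := key 3; rw [n3m, n3p] at e3
  have e4 := key 4; rw [n4m, n4p] at e4
  have h2 : (2 : 𝔽) = 0 := by
    have := CharP.cast_eq_zero 𝔽 2
    exact_mod_cast this
  have hcontra : (0 : 𝔽) = 1 := by
    linear_combination e0 + e1 + e2 + e3 + e4 +
      (2 - (h 3 (v 0) * h 0 (v 3) + h 2 (v 0) * h 0 (v 2) + h 4 (v 1) * h 1 (v 4) +
        h 3 (v 1) * h 1 (v 3) + h 4 (v 2) * h 2 (v 4))) * h2
  exact zero_ne_one hcontra
end
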